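/- There is an absolute constant C_3 > 0 such that: if v ∈ ℕ and u_1, u_2 > 0 satisfy u_1 u_2 ≥ 2^{-v}, then σ(v) := Σ_{(s_1,s_2) ∈ ℕ_0^2, s_1+s_2 = v} min(2^{s_1}u_1, 1/(2^{s_1}u_1)) · min(2^{s_2}u_2, 1/(2^{s_2}u_2)) ≤ C_3 · log(2^{v+1} u_1 u_2) / (2^v u_1 u_2), where log denotes the logarithm to base 2. -/

import Mathlib

/-!
Put `x = 2^{s₁} u₁`, `y = 2^{s₂} u₂` and `P = 2^v u₁ u₂ = x y ≥ 1`. Each term of `σ(v)` is at most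
`min(x², y², 1) / P`. The indices with `x < 1` contribute a geometric series in `4^{s₁}` dominated
by its last term, so at most `4/3`, and likewise those with `y < 1`. On the remaining indices
`1 ≤ x ≤ P`, and `x` doubles from one index to the next, so there are at most `log₂ P + 1` of them.
Hence `σ(v) ≤ (8/3 + log₂ P + 1) / P ≤ 4 log₂(2P) / P`.
-/

open Finset Real

lemma min_mul_min_mul_le {x y : ℝ} (hx : 0 < x) (hy : 0 < y) :
    min x (1 / x) * min y (1 / y) * (x * y) ≤ min (x ^ 2) (min (y ^ 2) 1) := by
  have hmx : 0 ≤ min x (1 / x) := le_min hx.le (by positivity)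
  have hmy : 0 ≤ min y (1 / y) := le_min hy.le (by positivity)
  refine le_min ?_ (le_min ?_ ?_)
  · calc min x (1 / x) * min y (1 / y) * (x * y) ≤ x * (1 / y) * (x * y) := by
          gcongr
          exacts [min_le_left _ _, min_le_right _ _]
      _ = x ^ 2 := by field_simp
  · calc min x (1 / x) * min y (1 / y) * (x * y) ≤ 1 / x * y * (x * y) := by
          gcongr
          exacts [min_le_right _ _, min_le_left _ _]
      _ = y ^ 2 := by field_simp
  · calc min x (1 / x) * min y (1 / y) * (x * y) ≤ 1 / x * (1 / y) * (x * y) := by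
          gcongr <;> exact min_le_right _ _
      _ = 1 := by field_simp

lemma min_sq_min_sq_one_le (x y : ℝ) :
    min (x ^ 2) (min (y ^ 2) 1) ≤
      (if x < 1 then x ^ 2 else 0) + (if y < 1 then y ^ 2 else 0) +
        (if 1 ≤ x ∧ 1 ≤ y then 1 else 0) := by
  have h₁ : min (x ^ 2) (min (y ^ 2) 1) ≤ x ^ 2 := min_le_left _ _
  have h₂ : min (x ^ 2) (min (y ^ 2) 1) ≤ y ^ 2 := min_le_of_right_le (min_le_left _ _)
  have h₃ : min (x ^ 2) (min (y ^ 2) 1) ≤ 1 := min_le_of_right_le (min_le_right _ _)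
  split_ifs <;> grind [sq_nonneg x, sq_nonneg y]

lemma min_mul_min_two_pow_le {u₁ u₂ : ℝ} (hu₁ : 0 < u₁) (hu₂ : 0 < u₂) {s v : ℕ} (hs : s ≤ v) :
    min (2 ^ s * u₁) (1 / (2 ^ s * u₁)) * min (2 ^ (v - s) * u₂) (1 / (2 ^ (v - s) * u₂)) ≤
      ((if 2 ^ s * u₁ < 1 then (2 ^ s * u₁) ^ 2 else 0) +
        (if 2 ^ (v - s) * u₂ < 1 then (2 ^ (v - s) * u₂) ^ 2 else 0) +
        (if 1 ≤ 2 ^ s * u₁ ∧ 1 ≤ 2 ^ (v - s) * u₂ then 1 else 0)) / (2 ^ v * u₁ * u₂) := by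
  have hxy : 2 ^ s * u₁ * (2 ^ (v - s) * u₂) = 2 ^ v * u₁ * u₂ := by
    rw [← pow_mul_pow_sub 2 hs]; ring
  rw [← hxy, le_div_iff₀ (by positivity)]
  exact (min_mul_min_mul_le (by positivity) (by positivity)).trans (min_sq_min_sq_one_le _ _)

lemma sum_pow_mul_le_of_lt_one {r c : ℝ} (hr : 1 < r) (hc : 0 ≤ c) {T : Finset ℕ}
    (hT : ∀ s ∈ T, r ^ s * c < 1) : ∑ s ∈ T, r ^ s * c ≤ r / (r - 1) := by
  have hr1 : 0 < r - 1 := sub_pos.mpr hr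
  obtain rfl | hne := T.eq_empty_or_nonempty
  · simp only [sum_empty]; positivity
  set m := T.max' hne
  calc ∑ s ∈ T, r ^ s * c ≤ ∑ s ∈ range (m + 1), r ^ s * c :=
        sum_le_sum_of_subset_of_nonneg (fun s hs => mem_range_succ_iff.mpr (T.le_max' s hs))
          fun _ _ _ => by positivity
    _ = (r * (r ^ m * c) - c) / (r - 1) := by
        rw [← sum_mul, geom_sum_eq hr.ne']; ring
    _ ≤ r / (r - 1) := by
        gcongr
        nlinarith [hT m (T.max'_mem hne)]

lemma sum_sq_two_pow_mul_le {u : ℝ} (hu : 0 ≤ u) (T : Finset ℕ) :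
    ∑ s ∈ T with 2 ^ s * u < 1, (2 ^ s * u) ^ 2 ≤ 4 / 3 := by
  have h4 (s : ℕ) : ((2 : ℝ) ^ s * u) ^ 2 = 4 ^ s * u ^ 2 := by
    rw [mul_pow, ← pow_mul, mul_comm s, pow_mul]; norm_num
  simp only [h4]
  convert sum_pow_mul_le_of_lt_one (r := 4) (by norm_num) (sq_nonneg u) fun s hs => ?_ using 1
  · norm_num
  rw [← h4]
  exact pow_lt_one₀ (by positivity) (mem_filter.mp hs).2 two_ne_zero

lemma card_le_logb_add_one_of_pow_sub_le {r P : ℝ} (hr : 1 < r) (hP : 1 ≤ P) {M : Finset ℕ}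
    (hM : ∀ a ∈ M, ∀ b ∈ M, a ≤ b → r ^ (b - a) ≤ P) : (#M : ℝ) ≤ logb r P + 1 := by
  obtain rfl | hne := M.eq_empty_or_nonempty
  · simp only [card_empty, Nat.cast_zero]
    linarith [logb_nonneg hr hP]
  set a := M.min' hne
  set b := M.max' hne
  have hab : a ≤ b := M.min'_le _ (M.max'_mem hne)
  have hcard : #M ≤ b - a + 1 := by
    calc #M ≤ #(Icc a b) := card_le_card fun s hs => mem_Icc.mpr ⟨M.min'_le s hs, M.le_max' s hs⟩
      _ = b - a + 1 := by rw [Nat.card_Icc]; omega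
  have hlog : ((b - a : ℕ) : ℝ) ≤ logb r P := by
    rw [le_logb_iff_rpow_le hr (by positivity), rpow_natCast]
    exact hM a (M.min'_mem hne) b (M.max'_mem hne) hab
  calc (#M : ℝ) ≤ ((b - a : ℕ) : ℝ) + 1 := by exact_mod_cast hcard
    _ ≤ logb r P + 1 := by linarith

lemma card_filter_one_le_two_pow_mul_le_logb {u₁ u₂ : ℝ} {v : ℕ}
    (hP : 1 ≤ 2 ^ v * u₁ * u₂) :
    (#{s ∈ range (v + 1) | 1 ≤ 2 ^ s * u₁ ∧ 1 ≤ 2 ^ (v - s) * u₂} : ℝ) ≤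
      logb 2 (2 ^ v * u₁ * u₂) + 1 := by
  refine card_le_logb_add_one_of_pow_sub_le one_lt_two hP fun a ha b hb hab => ?_
  simp only [mem_filter, mem_range] at ha hb
  calc (2 : ℝ) ^ (b - a) ≤ 2 ^ (b - a) * (2 ^ a * u₁ * (2 ^ (v - b) * u₂)) :=
        le_mul_of_one_le_right (by positivity) (one_le_mul_of_one_le_of_one_le ha.2.1 hb.2.2)
    _ = 2 ^ v * u₁ * u₂ := by
        rw [← pow_mul_pow_sub 2 (Nat.le_of_lt_succ hb.1), ← pow_mul_pow_sub 2 hab]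
        ring

lemma sum_range_sq_two_pow_sub_mul_le {u : ℝ} (hu : 0 ≤ u) (v : ℕ) :
    ∑ s ∈ range (v + 1), (if 2 ^ (v - s) * u < 1 then (2 ^ (v - s) * u) ^ 2 else 0) ≤ 4 / 3 := by
  have := sum_range_reflect (fun s => if 2 ^ s * u < 1 then (2 ^ s * u) ^ 2 else 0) (v + 1)
  simp only [add_tsub_cancel_right] at this
  rw [this, ← sum_filter]
  exact sum_sq_two_pow_mul_le hu _

theorem sigma_two_dimensional_bound :
    ∃ C₃ : ℝ, 0 < C₃ ∧ ∀ v : ℕ, 1 ≤ v → ∀ u₁ u₂ : ℝ, 0 < u₁ → 0 < u₂ →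
      ((2 : ℝ) ^ v)⁻¹ ≤ u₁ * u₂ →
      ∑ p ∈ Finset.HasAntidiagonal.antidiagonal v,
          min ((2 : ℝ) ^ p.1 * u₁) (1 / ((2 : ℝ) ^ p.1 * u₁)) *
            min ((2 : ℝ) ^ p.2 * u₂) (1 / ((2 : ℝ) ^ p.2 * u₂)) ≤
        C₃ * Real.logb 2 ((2 : ℝ) ^ (v + 1) * u₁ * u₂) / ((2 : ℝ) ^ v * u₁ * u₂) := by
  refine ⟨4, four_pos, fun v _ u₁ u₂ hu₁ hu₂ huu => ?_⟩
  set P := (2 : ℝ) ^ v * u₁ * u₂ with hP_def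
  have hP : 1 ≤ P := by
    rw [hP_def, mul_assoc, ← inv_mul_le_iff₀ (by positivity), mul_one]; exact huu
  have hlog : logb 2 ((2 : ℝ) ^ (v + 1) * u₁ * u₂) = logb 2 P + 1 := by
    rw [show (2 : ℝ) ^ (v + 1) * u₁ * u₂ = 2 * P by ring, logb_mul two_ne_zero (by positivity),
      logb_self_eq_one one_lt_two, add_comm]
  rw [Nat.sum_antidiagonal_eq_sum_range_succ_mk, hlog]
  calc _ ≤ _ := sum_le_sum fun s hs =>
        min_mul_min_two_pow_le hu₁ hu₂ (Nat.le_of_lt_succ (mem_range.mp hs))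
    _ = ((∑ s ∈ range (v + 1) with 2 ^ s * u₁ < 1, (2 ^ s * u₁) ^ 2) +
          ∑ s ∈ range (v + 1), (if 2 ^ (v - s) * u₂ < 1 then (2 ^ (v - s) * u₂) ^ 2 else 0) +
          #{s ∈ range (v + 1) | 1 ≤ 2 ^ s * u₁ ∧ 1 ≤ 2 ^ (v - s) * u₂}) / P := by
        rw [← sum_div, sum_add_distrib, sum_add_distrib, sum_boole, sum_filter]
    _ ≤ (4 / 3 + 4 / 3 + (logb 2 P + 1)) / P := by
        gcongr
        · exact sum_sq_two_pow_mul_le hu₁.le _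
        · exact sum_range_sq_two_pow_sub_mul_le hu₂.le v
        · exact card_filter_one_le_two_pow_mul_le_logb hP
    _ ≤ 4 * (logb 2 P + 1) / P := by
        gcongr
        linarith [logb_nonneg one_lt_two hP]
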